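/- Let G be an s-t DAG that is width-stable, i.e., for all nonnegative flows X ≤ Y on G, width(G|_X) ≤ width(G|_Y). Then for every nonnegative flow X on G, there exists an s-t path in G|_X every edge of which has flow value at least |X| / width(G|_X). -/

import Mathlib

open Finset

def IsWalk {V E : Type} (src tgt : E → V) : V → V → List E → Prop
  | a, b, [] => a = b
  | a, b, e :: L => src e = a ∧ IsWalk src tgt (tgt e) b L

def IsPath {V E : Type} (src tgt : E → V) (s t : V) (L : List E) : Prop :=
  L ≠ [] ∧ IsWalk src tgt s t L

def IsDAG {V E : Type} (src tgt : E → V) : Prop :=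
  ∀ (v : V) (L : List E), L ≠ [] → ¬ IsWalk src tgt v v L

/-- Width of the subgraph on the edge set `S`: the minimum number of `s`-`t` paths
using only edges of `S` and covering all edges of `S`. -/
noncomputable def widthIn {V E : Type} [Fintype E] (src tgt : E → V) (s t : V)
    (S : Set E) : ℕ :=
  sInf {k | ∃ P : Fin k → List E,
    (∀ i, IsPath src tgt s t (P i) ∧ ∀ e ∈ P i, e ∈ S) ∧ ∀ e ∈ S, ∃ i, e ∈ P i}

def IsFlowN {V E : Type} [Fintype E] [DecidableEq V] (src tgt : E → V) (s t : V)
    (X : E → ℕ) : Prop :=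
  ∀ v : V, v ≠ s → v ≠ t →
    (∑ e, if tgt e = v then X e else 0) = ∑ e, if src e = v then X e else 0

/-- Total flow out of the source `s`. -/
def flowValue {V E : Type} [Fintype E] [DecidableEq V] (src : E → V) (s : V)
    (X : E → ℕ) : ℕ :=
  ∑ e, if src e = s then X e else 0

/-- `G` is width-stable: the width of the support subgraph is monotone in the flow. -/
def WidthStable {V E : Type} [Fintype E] [DecidableEq V] (src tgt : E → V)
    (s t : V) : Prop :=
  ∀ X Y : E → ℕ, IsFlowN src tgt s t X → IsFlowN src tgt s t Y → (∀ e, X e ≤ Y e) →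
    widthIn src tgt s t {e | X e ≠ 0} ≤ widthIn src tgt s t {e | Y e ≠ 0}

/-!
Let `w = width(G|_X)` and call an edge heavy if it carries at least `|X| / w`. Let `S` be the set
of vertices reachable from `s` along heavy edges; if `t ∈ S` we are done, so suppose not.
Decompose `X` into `|X|` unit `s`-`t` paths and reroute each of them: go from `s` inside `S` to
the source of its last edge leaving `S`, then follow the original path. The rerouted paths form
a flow `Y ≤ |X| • X`; each leaves `S` exactly once, through an edge of the original path, and
never enters `S`. Hence every path of a minimum path cover of `G|_Y` leaves `S` at most once, so
by width-stability at most `w` edges of `G|_Y` leave `S`, each carrying `Y e ≤ X e < |X| / w`.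
Summing over them gives `|X| < |X|`.
-/

section Walk

variable {V E : Type} {src tgt : E → V}

theorem isWalk_append {a b : V} {L₁ L₂ : List E} :
    IsWalk src tgt a b (L₁ ++ L₂) ↔ ∃ m, IsWalk src tgt a m L₁ ∧ IsWalk src tgt m b L₂ := by
  induction L₁ generalizing a with
  | nil => simp [IsWalk]
  | cons e L₁ ih => simp [IsWalk, ih, and_assoc]

theorem IsWalk.append {a m b : V} {L₁ L₂ : List E} (h₁ : IsWalk src tgt a m L₁)
    (h₂ : IsWalk src tgt m b L₂) : IsWalk src tgt a b (L₁ ++ L₂) :=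
  isWalk_append.2 ⟨m, h₁, h₂⟩

theorem IsWalk.exists_eq_append_cons {a b : V} {L : List E} (h : IsWalk src tgt a b L) {e : E}
    (he : e ∈ L) : ∃ L₁ L₂, L = L₁ ++ e :: L₂ ∧ IsWalk src tgt a (src e) L₁ ∧
      IsWalk src tgt (tgt e) b L₂ := by
  obtain ⟨L₁, L₂, rfl⟩ := List.append_of_mem he
  obtain ⟨m, h₁, rfl, h₂⟩ := isWalk_append.1 h
  exact ⟨L₁, L₂, rfl, h₁, h₂⟩

theorem IsWalk.nodup (hdag : IsDAG src tgt) {a b : V} {L : List E}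
    (h : IsWalk src tgt a b L) : L.Nodup := by
  induction L generalizing a with
  | nil => exact List.nodup_nil
  | cons e L ih =>
    refine List.nodup_cons.2 ⟨fun he => ?_, ih h.2⟩
    obtain ⟨L₁, -, -, h₁, -⟩ := h.2.exists_eq_append_cons he
    exact hdag (src e) (e :: L₁) (List.cons_ne_nil _ _) ⟨rfl, h₁⟩

theorem IsWalk.tgt_getLast {a b : V} {L : List E} (h : IsWalk src tgt a b L) (hL : L ≠ []) :
    tgt (L.getLast hL) = b := by
  induction L generalizing a with
  | nil => exact absurd rfl hL
  | cons e L ih =>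
    cases L with
    | nil => exact h.2
    | cons f L => rw [List.getLast_cons (List.cons_ne_nil f L)]; exact ih h.2 _

theorem IsWalk.forall_notMem {S : Set V} {a b : V} {L : List E} (h : IsWalk src tgt a b L)
    (ha : a ∉ S) (hS : ∀ e ∈ L, tgt e ∈ S → src e ∈ S) : ∀ e ∈ L, src e ∉ S ∧ tgt e ∉ S := by
  induction L generalizing a with
  | nil => simp
  | cons e L ih =>
    have hsrc : src e ∉ S := h.1 ▸ ha
    have htgt : tgt e ∉ S := fun he => hsrc (hS e List.mem_cons_self he)
    simpa [hsrc, htgt] using ih h.2 htgt fun g hg => hS g (List.mem_cons_of_mem e hg)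

theorem IsWalk.eq_of_leaves {S : Set V} {a b : V} {L : List E} (h : IsWalk src tgt a b L)
    (hS : ∀ e ∈ L, tgt e ∈ S → src e ∈ S) {e₁ e₂ : E} (he₁ : e₁ ∈ L) (he₂ : e₂ ∈ L)
    (hl₁ : src e₁ ∈ S ∧ tgt e₁ ∉ S) (hl₂ : src e₂ ∈ S ∧ tgt e₂ ∉ S) : e₁ = e₂ := by
  induction L generalizing a with
  | nil => simp at he₁
  | cons e L ih =>
    have hS' : ∀ g ∈ L, tgt g ∈ S → src g ∈ S := fun g hg => hS g (List.mem_cons_of_mem e hg)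
    by_cases hl : src e ∈ S ∧ tgt e ∉ S
    · have hout := h.2.forall_notMem hl.2 hS'
      have key : ∀ g ∈ e :: L, src g ∈ S → g = e := fun g hg hg' =>
        (List.mem_cons.1 hg).resolve_right fun hgL => (hout g hgL).1 hg'
      rw [key e₁ he₁ hl₁.1, key e₂ he₂ hl₂.1]
    · have mem_tail : ∀ g ∈ e :: L, src g ∈ S ∧ tgt g ∉ S → g ∈ L := fun g hg hg' =>
        (List.mem_cons.1 hg).resolve_left fun hge => hl (hge ▸ hg')
      exact ih h.2 hS' (mem_tail e₁ he₁ hl₁) (mem_tail e₂ he₂ hl₂)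

theorem IsWalk.exists_last_exit {S : Set V} {a b : V} {L : List E} (h : IsWalk src tgt a b L)
    (hb : b ∉ S) : (a ∉ S ∧ ∀ e ∈ L, src e ∉ S ∧ tgt e ∉ S) ∨
      ∃ L₁ e L₂, L = L₁ ++ e :: L₂ ∧ src e ∈ S ∧ tgt e ∉ S ∧ IsWalk src tgt (tgt e) b L₂ ∧
        ∀ g ∈ L₂, src g ∉ S ∧ tgt g ∉ S := by
  induction L generalizing a with
  | nil => exact Or.inl ⟨h ▸ hb, by simp⟩
  | cons e L ih =>
    obtain rfl := h.1
    rcases ih h.2 with ⟨htgt, hL⟩ | ⟨L₁, e', L₂, rfl, hexit⟩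
    · by_cases hsrc : src e ∈ S
      · exact Or.inr ⟨[], e, L, rfl, hsrc, htgt, h.2, hL⟩
      · exact Or.inl ⟨hsrc, by simpa [hsrc, htgt] using hL⟩
    · exact Or.inr ⟨e :: L₁, e', L₂, rfl, hexit⟩

theorem IsWalk.countP_tgt_add [DecidableEq V] {a b : V} {L : List E} (h : IsWalk src tgt a b L)
    (v : V) : L.countP (tgt · = v) + (if a = v then 1 else 0) =
      L.countP (src · = v) + (if b = v then 1 else 0) := by
  induction L generalizing a with
  | nil => rw [show a = b from h]; simp
  | cons e L ih =>
    obtain rfl := h.1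
    have := ih h.2
    simp only [List.countP_cons, decide_eq_true_eq] at this ⊢
    split_ifs at this ⊢ <;> omega

def reachableVia (src tgt : E → V) (H : E → Prop) (a : V) : Set V :=
  {v | ∃ L, IsWalk src tgt a v L ∧ ∀ e ∈ L, H e}

variable {H : E → Prop} {a : V}

theorem self_mem_reachableVia : a ∈ reachableVia src tgt H a := ⟨[], rfl, by simp⟩

theorem tgt_mem_reachableVia {e : E} (he : src e ∈ reachableVia src tgt H a) (hH : H e) :
    tgt e ∈ reachableVia src tgt H a := by
  obtain ⟨L, hL, hLH⟩ := he
  refine ⟨L ++ [e], hL.append ⟨rfl, rfl⟩, ?_⟩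
  simp only [List.mem_append, List.mem_singleton]
  rintro g (hg | rfl)
  exacts [hLH g hg, hH]

theorem exists_walk_of_mem_reachableVia {v : V} (hv : v ∈ reachableVia src tgt H a) :
    ∃ L, IsWalk src tgt a v L ∧ ∀ e ∈ L,
      H e ∧ src e ∈ reachableVia src tgt H a ∧ tgt e ∈ reachableVia src tgt H a := by
  obtain ⟨L, hL, hLH⟩ := hv
  refine ⟨L, hL, fun e he => ?_⟩
  obtain ⟨L₁, L₂, rfl, h₁, -⟩ := hL.exists_eq_append_cons he
  have hsrc : src e ∈ reachableVia src tgt H a := ⟨L₁, h₁, fun g hg => hLH g (by simp [hg])⟩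
  exact ⟨hLH e he, hsrc, tgt_mem_reachableVia hsrc (hLH e he)⟩

end Walk

theorem count_le_of_nodup {α : Type*} [DecidableEq α] {L : List α} (hL : L.Nodup) {X : α → ℕ}
    (hX : ∀ a ∈ L, X a ≠ 0) (a : α) : L.count a ≤ X a := by
  by_cases ha : a ∈ L
  · exact (List.nodup_iff_count_le_one.1 hL a).trans (Nat.one_le_iff_ne_zero.2 (hX a ha))
  · simp [List.count_eq_zero.2 ha]

theorem count_flatten_ne_zero_iff {α : Type*} [DecidableEq α] {PS : List (List α)} {a : α} :
    PS.flatten.count a ≠ 0 ↔ ∃ p ∈ PS, a ∈ p := by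
  simp [List.count_eq_zero, List.mem_flatten]

theorem sum_ite_count {α : Type*} [Fintype α] [DecidableEq α] (P : α → Prop) [DecidablePred P]
    (L : List α) : (∑ a, if P a then L.count a else 0) = L.countP P := by
  rw [← Finset.sum_filter, ← Finset.sum_filter_count_eq_countP]
  refine (Finset.sum_subset (Finset.filter_subset_filter _ (Finset.subset_univ _)) ?_).symm
  intro a ha ha'
  simp only [Finset.mem_filter, List.mem_toFinset] at ha ha'
  exact List.count_eq_zero.2 fun hmem => ha' ⟨hmem, ha.2⟩

theorem sum_filter_count_flatten {α : Type*} [Fintype α] [DecidableEq α] (P : α → Prop)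
    [DecidablePred P] {PS : List (List α)} (h : ∀ p ∈ PS, p.countP P = 1) :
    ∑ a with P a, PS.flatten.count a = PS.length := by
  rw [Finset.sum_filter, sum_ite_count, List.countP_flatten, List.map_congr_left h]
  simp

theorem count_flatten_le_length_smul {α : Type*} [DecidableEq α] {PS : List (List α)}
    {X : α → ℕ} (h : ∀ p ∈ PS, p.Nodup ∧ ∀ a ∈ p, X a ≠ 0) (a : α) :
    PS.flatten.count a ≤ (PS.length • X) a := by
  rw [Pi.smul_apply, ← List.length_map (f := List.count a), List.count_flatten]
  refine List.sum_le_card_nsmul _ _ fun n hn => ?_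
  obtain ⟨p, hp, rfl⟩ := List.mem_map.1 hn
  exact count_le_of_nodup (h p hp).1 (h p hp).2 a

section Flow

variable {V E : Type} [Fintype E] [DecidableEq V] {src tgt : E → V} {s t : V}

theorem sum_ite_ne_zero_iff {P : E → Prop} [DecidablePred P] {X : E → ℕ} :
    (∑ e, if P e then X e else 0) ≠ 0 ↔ ∃ e, P e ∧ X e ≠ 0 := by
  simp [Finset.sum_eq_zero_iff]

theorem IsFlowN.add {X Y : E → ℕ} (hX : IsFlowN src tgt s t X) (hY : IsFlowN src tgt s t Y) :
    IsFlowN src tgt s t (X + Y) := by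
  intro v hvs hvt
  simp only [Pi.add_apply, ite_add_zero, Finset.sum_add_distrib, hX v hvs hvt, hY v hvs hvt]

theorem IsFlowN.of_add {X Y : E → ℕ} (hXY : IsFlowN src tgt s t (X + Y))
    (hY : IsFlowN src tgt s t Y) : IsFlowN src tgt s t X := by
  intro v hvs hvt
  have := hXY v hvs hvt
  simp only [Pi.add_apply, ite_add_zero, Finset.sum_add_distrib, hY v hvs hvt] at this
  omega

theorem IsFlowN.smul {X : E → ℕ} (hX : IsFlowN src tgt s t X) (c : ℕ) :
    IsFlowN src tgt s t (c • X) := by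
  intro v hvs hvt
  simp only [Pi.smul_apply, smul_eq_mul, ← mul_ite_zero, ← Finset.mul_sum, hX v hvs hvt]

theorem flowValue_add (X Y : E → ℕ) :
    flowValue src s (X + Y) = flowValue src s X + flowValue src s Y := by
  simp only [flowValue, Pi.add_apply, ite_add_zero, Finset.sum_add_distrib]

variable [DecidableEq E]

theorem IsWalk.isFlowN_count {L : List E} (h : IsWalk src tgt s t L) :
    IsFlowN src tgt s t (L.count ·) := by
  intro v hvs hvt
  have := h.countP_tgt_add v
  rw [if_neg (Ne.symm hvs), if_neg (Ne.symm hvt)] at this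
  simpa only [sum_ite_count, add_zero] using this

theorem isFlowN_count_flatten {PS : List (List E)} (h : ∀ p ∈ PS, IsWalk src tgt s t p) :
    IsFlowN src tgt s t (PS.flatten.count ·) := by
  induction PS with
  | nil => intro v _ _; simp
  | cons p PS ih =>
    have hsplit : (fun e => (p :: PS).flatten.count e) = (p.count ·) + (PS.flatten.count ·) := by
      funext e; simp
    rw [hsplit]
    exact (h p List.mem_cons_self).isFlowN_count.add
      (ih fun q hq => h q (List.mem_cons_of_mem p hq))

theorem IsPath.flowValue_count (hs : ∀ e, tgt e ≠ s) (ht : ∀ e, src e ≠ t) {L : List E}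
    (h : IsPath src tgt s t L) : flowValue src s (L.count ·) = 1 := by
  obtain ⟨hL, hw⟩ := h
  have hst : t ≠ s := by
    obtain ⟨e, L', rfl⟩ := List.exists_cons_of_ne_nil hL
    exact fun hts => ht e (hw.1.trans hts.symm)
  have := hw.countP_tgt_add s
  rw [if_pos rfl, if_neg hst, List.countP_eq_zero.2 fun e _ => by simpa using hs e] at this
  rw [flowValue, sum_ite_count]
  omega

end Flow

section Decomposition

variable {V E : Type} [Fintype E] [DecidableEq V] {src tgt : E → V} {s t : V} {X : E → ℕ}

theorem IsFlowN.exists_out_edge (hs : ∀ e, tgt e ≠ s) (hX : IsFlowN src tgt s t X) {e : E}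
    (he : X e ≠ 0) (het : tgt e ≠ t) : ∃ e', src e' = tgt e ∧ X e' ≠ 0 := by
  rw [← sum_ite_ne_zero_iff, ← hX (tgt e) (hs e) het, sum_ite_ne_zero_iff]
  exact ⟨e, rfl, he⟩

theorem IsFlowN.exists_walk_to_sink (hdag : IsDAG src tgt) (hs : ∀ e, tgt e ≠ s)
    (hX : IsFlowN src tgt s t X) {e : E} (he : X e ≠ 0) :
    ∃ L, IsWalk src tgt (tgt e) t L ∧ ∀ g ∈ L, X g ≠ 0 := by
  suffices key : ∀ k e, X e ≠ 0 → (∀ u L, IsWalk src tgt (tgt e) u L → L.length < k) →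
      ∃ L, IsWalk src tgt (tgt e) t L ∧ ∀ g ∈ L, X g ≠ 0 from
    key _ e he fun _ _ hL => Nat.lt_succ_of_le (hL.nodup hdag).length_le_card
  intro k
  induction k with
  | zero => exact fun e _ hk => absurd (hk _ [] rfl) (Nat.not_lt_zero 0)
  | succ k ih =>
    intro e he hk
    by_cases het : tgt e = t
    · exact ⟨[], het, by simp⟩
    obtain ⟨e', he'e, he'⟩ := hX.exists_out_edge hs he het
    obtain ⟨L, hL, hLX⟩ := ih e' he' fun u L hL => by
      simpa using hk u (e' :: L) ⟨he'e, hL⟩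
    exact ⟨e' :: L, ⟨he'e, hL⟩, by simpa [he'] using hLX⟩

theorem IsFlowN.flowValue_eq_inflow (hs : ∀ e, tgt e ≠ s) (ht : ∀ e, src e ≠ t)
    (hX : IsFlowN src tgt s t X) : flowValue src s X = ∑ e, if tgt e = t then X e else 0 := by
  by_cases hst : s = t
  · subst hst; simp [flowValue, hs, ht]
  set W : Finset V := insert s (insert t (univ.image src ∪ univ.image tgt))
  have hfiber (f : E → V) (hf : ∀ e, f e ∈ W) :
      ∑ v ∈ W, (((∑ e, if f e = v then X e else 0 : ℕ)) : ℤ) = ∑ e, (X e : ℤ) := by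
    push_cast
    simp_rw [← Finset.sum_filter]
    exact Finset.sum_fiberwise_of_maps_to (fun e _ => hf e) _
  have hnet : ∑ v ∈ W, (((∑ e, if tgt e = v then X e else 0 : ℕ) : ℤ) -
      ((∑ e, if src e = v then X e else 0 : ℕ) : ℤ)) = 0 := by
    rw [Finset.sum_sub_distrib, hfiber tgt (by simp [W]), hfiber src (by simp [W]), sub_self]
  rw [Finset.sum_eq_add t s (Ne.symm hst) (fun v _ hv => by rw [hX v hv.2 hv.1, sub_self])
    (by simp [W]) (by simp [W])] at hnet
  simp only [hs, ht, if_false, Finset.sum_const_zero] at hnet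
  rw [flowValue]
  omega

theorem IsFlowN.flowValue_pos (hdag : IsDAG src tgt) (hs : ∀ e, tgt e ≠ s)
    (ht : ∀ e, src e ≠ t) (hX : IsFlowN src tgt s t X) {e : E} (he : X e ≠ 0) :
    0 < flowValue src s X := by
  obtain ⟨L, hL, hLX⟩ := hX.exists_walk_to_sink hdag hs he
  have hwalk : IsWalk src tgt (src e) t (e :: L) := ⟨rfl, hL⟩
  have hlast := List.getLast_mem (List.cons_ne_nil e L)
  rw [hX.flowValue_eq_inflow hs ht, Nat.pos_iff_ne_zero, sum_ite_ne_zero_iff]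
  refine ⟨_, hwalk.tgt_getLast (List.cons_ne_nil e L), ?_⟩
  rcases List.mem_cons.1 hlast with h | h
  · rwa [h]
  · exact hLX _ h

theorem IsFlowN.exists_path (hdag : IsDAG src tgt) (hs : ∀ e, tgt e ≠ s)
    (hX : IsFlowN src tgt s t X) (hpos : 0 < flowValue src s X) :
    ∃ p, IsPath src tgt s t p ∧ ∀ e ∈ p, X e ≠ 0 := by
  obtain ⟨e, hes, he⟩ := sum_ite_ne_zero_iff.1 hpos.ne'
  obtain ⟨L, hL, hLX⟩ := hX.exists_walk_to_sink hdag hs he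
  exact ⟨e :: L, ⟨List.cons_ne_nil e L, hes, hL⟩, by simpa [he] using hLX⟩

theorem IsFlowN.exists_path_decomposition [DecidableEq E] (hdag : IsDAG src tgt)
    (hs : ∀ e, tgt e ≠ s) (ht : ∀ e, src e ≠ t) (hX : IsFlowN src tgt s t X) :
    ∃ PS : List (List E), PS.length = flowValue src s X ∧
      (∀ p ∈ PS, IsPath src tgt s t p ∧ ∀ e ∈ p, X e ≠ 0) ∧ ∀ e, X e = PS.flatten.count e := by
  induction hval : flowValue src s X generalizing X with
  | zero =>
    refine ⟨[], rfl, by simp, fun e => ?_⟩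
    by_contra he
    exact (hX.flowValue_pos hdag hs ht (by simpa using he)).ne' hval
  | succ n ih =>
    obtain ⟨p, hp, hpX⟩ := hX.exists_path hdag hs (hval ▸ Nat.succ_pos n)
    have hle := count_le_of_nodup (hp.2.nodup hdag) hpX
    set X' : E → ℕ := fun e => X e - p.count e
    have hsplit : X = X' + (p.count ·) := funext fun e => (Nat.sub_add_cancel (hle e)).symm
    have hX' : IsFlowN src tgt s t X' := (hsplit ▸ hX).of_add hp.2.isFlowN_count
    have hval' : flowValue src s X' = n := by
      have := flowValue_add (src := src) (s := s) X' (p.count ·)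
      rw [← hsplit, hval, hp.flowValue_count hs ht] at this
      omega
    obtain ⟨PS, hlen, hPS, hcount⟩ := ih hX' hval'
    refine ⟨p :: PS, by simp [hlen], ?_, fun e => ?_⟩
    · simp only [List.mem_cons, forall_eq_or_imp]
      exact ⟨⟨hp, hpX⟩, fun q hq =>
        ⟨(hPS q hq).1, fun e he h => (hPS q hq).2 e he (by simp [X', h])⟩⟩
    · rw [congrFun hsplit e, Pi.add_apply, hcount e]
      simp [add_comm]

end Decomposition

section Width

variable {V E : Type} [Fintype E] {src tgt : E → V} {s t : V}

theorem exists_cover_widthIn {T : Set E} {PS : List (List E)}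
    (hPS : ∀ p ∈ PS, IsPath src tgt s t p ∧ ∀ e ∈ p, e ∈ T) (hcov : ∀ e ∈ T, ∃ p ∈ PS, e ∈ p) :
    ∃ R : Fin (widthIn src tgt s t T) → List E,
      (∀ i, IsPath src tgt s t (R i) ∧ ∀ e ∈ R i, e ∈ T) ∧ ∀ e ∈ T, ∃ i, e ∈ R i := by
  refine Nat.sInf_mem (s := {k | ∃ P : Fin k → List E,
    (∀ i, IsPath src tgt s t (P i) ∧ ∀ e ∈ P i, e ∈ T) ∧ ∀ e ∈ T, ∃ i, e ∈ P i})
    ⟨PS.length, PS.get, fun i => hPS _ (PS.get_mem i), fun e he => ?_⟩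
  obtain ⟨p, hp, hep⟩ := hcov e he
  obtain ⟨i, rfl⟩ := List.mem_iff_get.1 hp
  exact ⟨i, hep⟩

theorem card_leaves_le_widthIn [DecidableEq E] {S : Set V} {T : Set E} [DecidablePred (· ∈ S)]
    [DecidablePred (· ∈ T)] {PS : List (List E)}
    (hPS : ∀ p ∈ PS, IsPath src tgt s t p ∧ ∀ e ∈ p, e ∈ T) (hcov : ∀ e ∈ T, ∃ p ∈ PS, e ∈ p)
    (hT : ∀ e ∈ T, tgt e ∈ S → src e ∈ S) :
    #{e | (src e ∈ S ∧ tgt e ∉ S) ∧ e ∈ T} ≤ widthIn src tgt s t T := by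
  obtain ⟨R, hR, hRcov⟩ := exists_cover_widthIn hPS hcov
  calc #{e | (src e ∈ S ∧ tgt e ∉ S) ∧ e ∈ T}
      ≤ #(univ.biUnion fun i => {e ∈ (R i).toFinset | src e ∈ S ∧ tgt e ∉ S}) := by
        refine Finset.card_le_card fun e he => ?_
        obtain ⟨hl, heT⟩ := (Finset.mem_filter.1 he).2
        obtain ⟨i, hi⟩ := hRcov e heT
        exact Finset.mem_biUnion.2 ⟨i, Finset.mem_univ i, by simp [hi, hl]⟩
    _ ≤ ∑ i, #{e ∈ (R i).toFinset | src e ∈ S ∧ tgt e ∉ S} := Finset.card_biUnion_le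
    _ ≤ ∑ _i, 1 := by
        refine Finset.sum_le_sum fun i _ => Finset.card_le_one.2 fun e₁ h₁ e₂ h₂ => ?_
        simp only [Finset.mem_filter, List.mem_toFinset] at h₁ h₂
        exact (hR i).1.2.eq_of_leaves (fun e he => hT e ((hR i).2 e he)) h₁.1 h₂.1 h₁.2 h₂.2
    _ = widthIn src tgt s t T := by simp

end Width

section Cut

variable {V E : Type} {src tgt : E → V} {s t : V} {X : E → ℕ} {S : Set V}

def IsReachableCut (src tgt : E → V) (s t : V) (X : E → ℕ) (S : Set V) : Prop :=
  s ∈ S ∧ t ∉ S ∧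
    ∀ v ∈ S, ∃ L, IsWalk src tgt s v L ∧ ∀ e ∈ L, X e ≠ 0 ∧ src e ∈ S ∧ tgt e ∈ S

variable [DecidableEq E] [DecidablePred (· ∈ S)]

theorem IsReachableCut.exists_reroute (hS : IsReachableCut src tgt s t X S) {p : List E}
    (hp : IsWalk src tgt s t p) (hpX : ∀ e ∈ p, X e ≠ 0) :
    ∃ p', IsPath src tgt s t p' ∧ (∀ e ∈ p', X e ≠ 0 ∧ (tgt e ∈ S → src e ∈ S)) ∧
      p'.countP (fun e => src e ∈ S ∧ tgt e ∉ S) = 1 ∧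
      ∀ e, src e ∈ S → tgt e ∉ S → p'.count e ≤ p.count e := by
  obtain ⟨hsS, htS, hreach⟩ := hS
  obtain ⟨L₁, e, L₂, rfl, hsrc, htgt, hL₂, hout⟩ :=
    (hp.exists_last_exit htS).resolve_left fun h => h.1 hsS
  obtain ⟨M, hM, hMS⟩ := hreach _ hsrc
  refine ⟨M ++ e :: L₂, ⟨by simp, hM.append ⟨rfl, hL₂⟩⟩, ?_, ?_, fun g hgs hgt => ?_⟩
  · simp only [List.mem_append, List.mem_cons]
    rintro g (hg | rfl | hg)
    · exact ⟨(hMS g hg).1, fun _ => (hMS g hg).2.1⟩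
    · exact ⟨hpX _ (by simp), fun _ => hsrc⟩
    · exact ⟨hpX g (by simp [hg]), fun h => absurd h (hout g hg).2⟩
  · rw [List.countP_append, List.countP_cons,
      List.countP_eq_zero.2 fun g hg => by simp [(hMS g hg).2.2],
      List.countP_eq_zero.2 fun g hg => by simp [(hout g hg).1]]
    simp [hsrc, htgt]
  · have hgM : g ∉ M := fun hg => hgt (hMS g hg).2.2
    simp [List.count_eq_zero.2 hgM]

theorem IsReachableCut.exists_reroute_list (hS : IsReachableCut src tgt s t X S)
    {PS : List (List E)} (hPS : ∀ p ∈ PS, IsPath src tgt s t p ∧ ∀ e ∈ p, X e ≠ 0) :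
    ∃ PS' : List (List E), PS'.length = PS.length ∧
      (∀ p' ∈ PS', IsPath src tgt s t p' ∧ (∀ e ∈ p', X e ≠ 0 ∧ (tgt e ∈ S → src e ∈ S)) ∧
        p'.countP (fun e => src e ∈ S ∧ tgt e ∉ S) = 1) ∧
      ∀ e, src e ∈ S → tgt e ∉ S → PS'.flatten.count e ≤ PS.flatten.count e := by
  induction PS with
  | nil => exact ⟨[], rfl, by simp, by simp⟩
  | cons p PS ih =>
    obtain ⟨hp, hpX⟩ := hPS p List.mem_cons_self
    obtain ⟨p', hp', hp'X, hp'cnt, hp'le⟩ := hS.exists_reroute hp.2 hpX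
    obtain ⟨PS', hlen, hPS', hle⟩ := ih fun q hq => hPS q (List.mem_cons_of_mem p hq)
    refine ⟨p' :: PS', by simp [hlen], ?_, fun e hes het => ?_⟩
    · simp only [List.mem_cons, forall_eq_or_imp]
      exact ⟨⟨hp', hp'X, hp'cnt⟩, hPS'⟩
    · simp only [List.flatten_cons, List.count_append]
      exact Nat.add_le_add (hp'le e hes het) (hle e hes het)

end Cut

section Main

variable {V E : Type} [Fintype E] [DecidableEq V] {src tgt : E → V} {s t : V} {X : E → ℕ}

theorem IsFlowN.widthIn_pos (hdag : IsDAG src tgt) (hs : ∀ e, tgt e ≠ s) (ht : ∀ e, src e ≠ t)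
    (hX : IsFlowN src tgt s t X) {e : E} (he : X e ≠ 0) :
    0 < widthIn src tgt s t {e | X e ≠ 0} := by
  classical
  obtain ⟨PS, -, hPS, hXPS⟩ := hX.exists_path_decomposition hdag hs ht
  obtain ⟨R, -, hRcov⟩ := exists_cover_widthIn (T := {e | X e ≠ 0}) hPS
    fun e he => count_flatten_ne_zero_iff.1 (hXPS e ▸ he)
  exact (hRcov e he).choose.pos

theorem IsFlowN.flowValue_le_widthIn_mul (hdag : IsDAG src tgt) (hs : ∀ e, tgt e ≠ s)
    (ht : ∀ e, src e ≠ t) (hstable : WidthStable src tgt s t) (hX : IsFlowN src tgt s t X)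
    {S : Set V} (hS : IsReachableCut src tgt s t X S) {c : ℕ}
    (hc : ∀ e, src e ∈ S → tgt e ∉ S → X e ≤ c) :
    flowValue src s X ≤ widthIn src tgt s t {e | X e ≠ 0} * c := by
  classical
  obtain ⟨PS, hlen, hPS, hXPS⟩ := hX.exists_path_decomposition hdag hs ht
  rcases Nat.eq_zero_or_pos PS.length with h0 | hpos
  · simp [← hlen, h0]
  obtain ⟨PS', hlen', hPS', hYX⟩ := hS.exists_reroute_list hPS
  set Y : E → ℕ := (PS'.flatten.count ·)
  have hY : IsFlowN src tgt s t Y := isFlowN_count_flatten fun p hp => (hPS' p hp).1.2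
  have hYle : ∀ e, Y e ≤ (PS.length • X) e := hlen' ▸ count_flatten_le_length_smul
    fun p hp => ⟨(hPS' p hp).1.2.nodup hdag, fun e he => ((hPS' p hp).2.1 e he).1⟩
  have hwidth : widthIn src tgt s t {e | Y e ≠ 0} ≤ widthIn src tgt s t {e | X e ≠ 0} := by
    have := hstable Y _ hY (hX.smul PS.length) hYle
    simpa [hpos.ne'] using this
  have hcard := card_leaves_le_widthIn (S := S) (T := {e | Y e ≠ 0}) (PS := PS')
    (fun p hp => ⟨(hPS' p hp).1, fun e he => count_flatten_ne_zero_iff.2 ⟨p, hp, he⟩⟩)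
    (fun e he => count_flatten_ne_zero_iff.1 he)
    (fun e he => by
      obtain ⟨p, hp, hep⟩ := count_flatten_ne_zero_iff.1 he
      exact ((hPS' p hp).2.1 e hep).2)
  have hsum : ∑ e with (src e ∈ S ∧ tgt e ∉ S) ∧ e ∈ {e | Y e ≠ 0}, Y e = PS'.length := by
    rw [← Finset.filter_filter]
    simp only [Set.mem_ofPred_eq]
    rw [Finset.sum_filter_ne_zero]
    exact sum_filter_count_flatten _ fun p hp => (hPS' p hp).2.2
  calc flowValue src s X = ∑ e with (src e ∈ S ∧ tgt e ∉ S) ∧ e ∈ {e | Y e ≠ 0}, Y e := by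
        rw [hsum, hlen', hlen]
    _ ≤ #{e | (src e ∈ S ∧ tgt e ∉ S) ∧ e ∈ {e | Y e ≠ 0}} • c := by
        refine Finset.sum_le_card_nsmul _ _ _ fun e he => ?_
        obtain ⟨hes, het⟩ := (Finset.mem_filter.1 he).2.1
        exact (hYX e hes het).trans ((hXPS e).symm ▸ hc e hes het)
    _ ≤ widthIn src tgt s t {e | X e ≠ 0} * c :=
        Nat.mul_le_mul_right c (hcard.trans hwidth)

end Main

/-- In a width-stable `s`-`t` DAG, for every nonzero nonnegative flow `X` there is
an `s`-`t` path in `G|_X` carrying at least `|X| / width(G|_X)` flow. -/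
theorem stmt_7 {V E : Type} [Fintype E] [DecidableEq V]
    (src tgt : E → V) (s t : V)
    (hdag : IsDAG src tgt) (hs : ∀ e, tgt e ≠ s) (ht : ∀ e, src e ≠ t)
    (hstable : WidthStable src tgt s t)
    (X : E → ℕ) (hflow : IsFlowN src tgt s t X) (hX0 : X ≠ 0) :
    ∃ L : List E, IsPath src tgt s t L ∧ (∀ e ∈ L, X e ≠ 0) ∧
      ∀ e ∈ L, (flowValue src s X : ℝ) / (widthIn src tgt s t {e | X e ≠ 0} : ℝ)
        ≤ (X e : ℝ) := by
  classical
  obtain ⟨e₀, he₀⟩ : ∃ e, X e ≠ 0 := Function.ne_iff.1 hX0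
  set f := flowValue src s X
  set w := widthIn src tgt s t {e | X e ≠ 0}
  have hf : 0 < f := hflow.flowValue_pos hdag hs ht he₀
  have hw : 0 < w := hflow.widthIn_pos hdag hs ht he₀
  set S := reachableVia src tgt (fun e => f ≤ X e * w) s
  have hheavy : ∀ e, f ≤ X e * w → X e ≠ 0 := fun e he h => by simp [h] at he; omega
  by_cases htS : t ∈ S
  · obtain ⟨L, hL, hLheavy⟩ := htS
    refine ⟨L, ⟨?_, hL⟩, fun e he => hheavy e (hLheavy e he), fun e he => ?_⟩
    · rintro rfl
      exact hf.ne' (Finset.sum_eq_zero fun e _ => if_neg (hL ▸ ht e))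
    · exact div_le_of_le_mul₀ (by positivity) (by positivity) (by exact_mod_cast hLheavy e he)
  · have hcut : IsReachableCut src tgt s t X S := ⟨self_mem_reachableVia, htS, fun v hv => by
      obtain ⟨L, hL, hLS⟩ := exists_walk_of_mem_reachableVia hv
      exact ⟨L, hL, fun e he => ⟨hheavy e (hLS e he).1, (hLS e he).2⟩⟩⟩
    have hle : f ≤ w * ((f - 1) / w) :=
      hflow.flowValue_le_widthIn_mul hdag hs ht hstable hcut fun e hes het =>
        (Nat.le_div_iff_mul_le hw).2 <| by
          have := mt (tgt_mem_reachableVia hes) het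
          omega
    have := Nat.mul_div_le (f - 1) w
    omega
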